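/- Let T be a contravariant additive left exact functor on left Λ-modules that commutes with inverse limits (sends direct limits to inverse limits via an isomorphism). If T(I) = 0 for every left ideal I of Λ, then T(A) = 0 for every left Λ-module A. -/

import Mathlib

/-!
`T Λ = 0` since `Λ` is the ideal `⊤`, so `T Λⁿ = 0` by additivity. A finitely generated module `M`
is a quotient `Λⁿ ↠ M`, and left exactness turns this epimorphism into a monomorphism
`T M ↪ T Λⁿ = 0`. Finally every module is the direct limit of its finitely generated
submodules, so `T A` is an inverse limit of zero modules.
-/

open CategoryTheory CategoryTheory.Limits Opposite

namespace CategoryTheory.Functor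

variable {C D : Type*} [Category C] [Category D]

lemma isZero_obj_op_of_isColimit [HasZeroMorphisms D] {J : Type*} [Category J]
    (T : Cᵒᵖ ⥤ D) [PreservesLimitsOfShape Jᵒᵖ T] {F : J ⥤ C} {c : Cocone F}
    (hc : IsColimit c) (h : ∀ j, IsZero (T.obj (op (F.obj j)))) :
    IsZero (T.obj (op c.pt)) := by
  rw [IsZero.iff_id_eq_zero]
  exact (isLimitOfPreserves T hc.op).hom_ext fun j => (h j.unop).eq_of_tgt _ _

lemma isZero_obj_op_of_epi [HasZeroMorphisms D] (T : Cᵒᵖ ⥤ D) [T.PreservesMonomorphisms]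
    {X Y : C} (g : X ⟶ Y) [Epi g] (hX : IsZero (T.obj (op X))) : IsZero (T.obj (op Y)) := by
  rw [IsZero.iff_id_eq_zero, ← cancel_mono (T.map g.op)]
  exact hX.eq_of_tgt _ _

lemma isZero_obj_op_biproduct [Preadditive C] [Preadditive D] (T : Cᵒᵖ ⥤ D) [T.Additive]
    {J : Type} [Fintype J] (f : J → C) [HasBiproduct f]
    (h : ∀ j, IsZero (T.obj (op (f j)))) : IsZero (T.obj (op (⨁ f))) := by
  rw [IsZero.iff_id_eq_zero, ← T.map_id, ← op_id, ← biproduct.total (f := f), op_sum, T.map_sum]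
  refine Finset.sum_eq_zero fun j _ => ?_
  rw [op_comp, T.map_comp, (h j).eq_of_tgt (T.map (biproduct.ι f j).op) 0, zero_comp]

end CategoryTheory.Functor

section ModuleCat

variable {Λ : Type} [Ring Λ] {D : Type*} [Category D] (T : (ModuleCat.{0} Λ)ᵒᵖ ⥤ D)

lemma isZero_obj_op_of_finite [Preadditive D] [T.Additive] [T.PreservesMonomorphisms]
    (hΛ : IsZero (T.obj (op (ModuleCat.of Λ Λ)))) (M : ModuleCat.{0} Λ) [Module.Finite Λ M] :
    IsZero (T.obj (op M)) := by
  obtain ⟨n, f, hf⟩ := Module.Finite.exists_fin' Λ M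
  have hfree : IsZero (T.obj (op (ModuleCat.of Λ (Fin n → Λ)))) :=
    (T.isZero_obj_op_biproduct (fun _ : Fin n => ModuleCat.of Λ Λ) fun _ => hΛ).of_iso
      (T.mapIso (ModuleCat.biproductIsoPi fun _ : Fin n => ModuleCat.of Λ Λ).op)
  have : Epi (ModuleCat.ofHom f) := (ModuleCat.epi_iff_surjective _).mpr hf
  exact T.isZero_obj_op_of_epi (ModuleCat.ofHom f) hfree

lemma isZero_obj_op_of_forall_fg [HasZeroMorphisms D] (A : ModuleCat.{0} Λ)
    [PreservesLimitsOfShape {N : Submodule Λ A // N.FG}ᵒᵖ T]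
    (hfin : ∀ (N : Submodule Λ A), N.FG → IsZero (T.obj (op (ModuleCat.of Λ N)))) :
    IsZero (T.obj (op A)) := by
  classical
  exact (T.isZero_obj_op_of_isColimit (ModuleCat.directLimitIsColimit _ (Module.fgSystem Λ A))
    fun N => hfin N.1 N.2).of_iso (T.mapIso (Module.fgSystem.equiv Λ A).toModuleIso.op)

end ModuleCat

/-- Let `T` be a contravariant additive left exact functor on left `Λ`-modules that carries
direct limits to inverse limits (i.e., as a functor on the opposite category, it preserves
cofiltered limits).  If `T I = 0` for every left ideal `I` of `Λ`, then `T A = 0` for every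
left `Λ`-module `A`. -/
theorem stmt6 {Λ Λ₁ : Type} [Ring Λ] [Ring Λ₁]
    (T : (ModuleCat.{0} Λ)ᵒᵖ ⥤ ModuleCat.{0} Λ₁) [T.Additive]
    [PreservesFiniteLimits T] [PreservesCofilteredLimits T]
    (hI : ∀ I : Ideal Λ, IsZero (T.obj (Opposite.op (ModuleCat.of Λ I)))) :
    ∀ A : ModuleCat.{0} Λ, IsZero (T.obj (Opposite.op A)) := by
  have hΛ : IsZero (T.obj (op (ModuleCat.of Λ Λ))) :=
    (hI ⊤).of_iso (T.mapIso (Submodule.topEquiv (R := Λ) (M := Λ)).toModuleIso.op)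
  intro A
  refine isZero_obj_op_of_forall_fg T A fun N hN => ?_
  have : Module.Finite Λ N := Module.Finite.iff_fg.mpr hN
  exact isZero_obj_op_of_finite T hΛ (ModuleCat.of Λ N)
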